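/- arXiv:1211.3926 — 7 statements merged into one kernel-verified Lean document; each statement's English description precedes it below -/
import Mathlib

section
/- Let L ⊂ ℝ^N be a full-rank lattice (a discrete cocompact subgroup) and let U ⊂ ℝ^N be a nonempty open cone (closed under multiplication by positive reals). Then U contains a primitive vector of L, i.e., a vector l ∈ L that can be extended to a ℤ-basis of L. -/
/-!
Cocompactness gives a radius `R` such that every point of `ℝ^N` lies within `R` of `L`. If the
ball of radius `ε` about `x ≠ 0` lies in `U`, then so does the ball of radius `t ε` about `t x`,
which for large `t` contains a lattice point `l ≠ 0`. Let `n > 0` generate the ideal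
`{f l | f : L →ₗ[ℤ] ℤ}`. Then `n` divides every coordinate of `l`, so `l = n • w`, and a
functional with `f l = n` has `f w = 1`; hence `ker f` is a complement of `ℤ w` and `w` is
primitive. Finally `w = n⁻¹ • l` is still in the cone.
-/

open Module

theorem exists_basis_apply_eq_of_dual_apply_eq_one {R M ι : Type*} [CommRing R] [IsDomain R]
    [IsPrincipalIdealRing R] [AddCommGroup M] [Module R M] [Module.Free R M] [Module.Finite R M]
    [Fintype ι] (hι : Fintype.card ι = finrank R M) {v : M} {f : Dual R M} (hfv : f v = 1) :
    ∃ (b : Basis ι R M) (i : ι), b i = v := by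
  let bK := (Free.chooseBasis R (LinearMap.ker f)).reindex (Fintype.equivFin _)
  have hli : ∀ (c : R), ∀ x ∈ LinearMap.ker f, c • v + x = 0 → c = 0 := fun c x hx h => by
    simpa [hfv, LinearMap.mem_ker.mp hx] using congrArg f h
  have hsp : ∀ z : M, ∃ c : R, z + c • v ∈ LinearMap.ker f := fun z =>
    ⟨-f z, by simp [hfv]⟩
  let B := Basis.mkFinCons v bK hli hsp
  let e : Fin (_ + 1) ≃ ι :=
    Fintype.equivOfCardEq (by rw [hι, finrank_eq_card_basis B])
  refine ⟨B.reindex e, e 0, ?_⟩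
  rw [Basis.reindex_apply, Equiv.symm_apply_apply, Basis.coe_mkFinCons, Fin.cons_zero]

theorem exists_pos_nsmul_eq_and_dual_apply_eq_one {M : Type*} [AddCommGroup M]
    [Module.Free ℤ M] [Module.Finite ℤ M] {v : M} (hv : v ≠ 0) :
    ∃ (n : ℕ) (w : M) (f : Dual ℤ M), 0 < n ∧ n • w = v ∧ f w = 1 := by
  set I := LinearMap.range (Dual.eval ℤ M v)
  set n := (Submodule.IsPrincipal.generator I).natAbs
  have hI : I = Ideal.span {(n : ℤ)} := by
    rw [← Ideal.span_singleton_generator I, Ideal.span_singleton_eq_span_singleton]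
    exact Int.associated_natAbs _
  have hdvd : ∀ g : Dual ℤ M, (n : ℤ) ∣ g v := fun g => by
    rw [← Ideal.mem_span_singleton, ← hI]
    exact LinearMap.mem_range_self _ g
  obtain ⟨f, hf⟩ : (n : ℤ) ∈ I := hI ▸ Ideal.mem_span_singleton_self _
  rw [Dual.eval_apply] at hf
  let b := Free.chooseBasis ℤ M
  choose c hc using fun i => hdvd (b.coord i)
  have hvw : n • b.equivFun.symm c = v := by
    apply b.equivFun.injective
    ext i
    rw [map_nsmul, LinearEquiv.apply_symm_apply, Pi.smul_apply, nsmul_eq_mul, ← hc,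
      Basis.equivFun_apply, Basis.coord_apply]
  have hn : n ≠ 0 := by
    rintro hn
    rw [hn, zero_smul] at hvw
    exact hv hvw.symm
  refine ⟨n, _, f, Nat.pos_of_ne_zero hn, hvw, ?_⟩
  rw [← hvw, map_nsmul, nsmul_eq_mul] at hf
  exact (mul_eq_left₀ (by exact_mod_cast hn)).mp hf

namespace ZLattice

variable {E : Type*} [NormedAddCommGroup E] [NormedSpace ℝ E] [FiniteDimensional ℝ E]
  (L : Submodule ℤ E) [DiscreteTopology L] [IsZLattice ℝ L]

theorem exists_forall_exists_mem_norm_sub_le : ∃ R, ∀ x : E, ∃ l ∈ L, ‖x - l‖ ≤ R := by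
  have := module_free ℝ L
  let B := (Free.chooseBasis ℤ L).ofZLatticeBasis ℝ L
  exact ⟨∑ i, ‖B i‖, fun x => ⟨ZSpan.floor B x,
    ((Free.chooseBasis ℤ L).ofZLatticeBasis_span ℝ L).le (ZSpan.floor B x).2,
    ZSpan.norm_fract_le B x⟩⟩

theorem exists_mem_ne_zero_of_isOpen_of_smul_mem [Nontrivial E] {U : Set E} (hUo : IsOpen U)
    (hUne : U.Nonempty) (hUcone : ∀ x ∈ U, ∀ t : ℝ, 0 < t → t • x ∈ U) :
    ∃ l ∈ L, l ≠ 0 ∧ l ∈ U := by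
  obtain ⟨x, hxU, hx0⟩ : ∃ x ∈ U, x ≠ 0 := by
    by_contra! h
    exact not_isOpen_singleton (0 : E) (hUne.subset_singleton_iff.mp h ▸ hUo)
  obtain ⟨ε, hε, hball⟩ := Metric.isOpen_iff.mp hUo x hxU
  set δ := min ε ‖x‖
  have hδ : 0 < δ := lt_min hε (norm_pos_iff.mpr hx0)
  obtain ⟨R, hR⟩ := exists_forall_exists_mem_norm_sub_le L
  obtain ⟨t, ht, hRt⟩ := exists_pos_lt_mul hδ R
  obtain ⟨l, hlL, hl⟩ := hR (t • x)
  have hl_near : ‖t⁻¹ • l - x‖ < δ := by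
    calc ‖t⁻¹ • l - x‖ = ‖t⁻¹ • (l - t • x)‖ := by rw [smul_sub, inv_smul_smul₀ ht.ne']
      _ = t⁻¹ * ‖t • x - l‖ := by
          rw [norm_smul, norm_sub_rev, Real.norm_of_nonneg (inv_nonneg.mpr ht.le)]
      _ < δ := by rw [inv_mul_lt_iff₀ ht]; linarith
  refine ⟨l, hlL, ?_, ?_⟩
  · rintro rfl
    have : t * δ ≤ ‖t • x - 0‖ := by
      rw [sub_zero, norm_smul, Real.norm_of_nonneg ht.le]
      exact mul_le_mul_of_nonneg_left (min_le_right _ _) ht.le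
    linarith
  · have hlU : t⁻¹ • l ∈ U :=
      hball (mem_ball_iff_norm.mpr (hl_near.trans_le (min_le_left _ _)))
    simpa [smul_smul, mul_inv_cancel₀ ht.ne'] using hUcone _ hlU t ht

end ZLattice

/-- A nonempty open cone in `ℝ^N` contains a primitive vector of any full-rank lattice `L`,
i.e. a vector that is a member of some `ℤ`-basis of `L`. -/
theorem open_cone_contains_primitive_vector {N : ℕ} (hN : 0 < N)
    (L : Submodule ℤ (EuclideanSpace ℝ (Fin N)))
    [DiscreteTopology L] [IsZLattice ℝ L]
    (U : Set (EuclideanSpace ℝ (Fin N))) (hUo : IsOpen U) (hUne : U.Nonempty)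
    (hUcone : ∀ x ∈ U, ∀ t : ℝ, 0 < t → t • x ∈ U) :
    ∃ l : L, (l : EuclideanSpace ℝ (Fin N)) ∈ U ∧
      ∃ (b : Module.Basis (Fin N) ℤ L) (i : Fin N), b i = l := by
  have := ZLattice.module_free ℝ L
  have := ZLattice.module_finite ℝ L
  have : Nonempty (Fin N) := ⟨⟨0, hN⟩⟩
  obtain ⟨v, hvL, hv0, hvU⟩ := ZLattice.exists_mem_ne_zero_of_isOpen_of_smul_mem L hUo hUne hUcone
  obtain ⟨n, w, f, hn, hvw, hfw⟩ :=
    exists_pos_nsmul_eq_and_dual_apply_eq_one (v := (⟨v, hvL⟩ : L)) (by simpa using hv0)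
  have hv : v = (n : ℝ) • (w : EuclideanSpace ℝ (Fin N)) := by
    rw [Nat.cast_smul_eq_nsmul, ← Submodule.coe_smul_of_tower, hvw]
  refine ⟨w, ?_, exists_basis_apply_eq_of_dual_apply_eq_one ?_ hfw⟩
  · have := hUcone v hvU (n : ℝ)⁻¹ (by positivity)
    rwa [hv, inv_smul_smul₀ (by positivity)] at this
  · rw [Fintype.card_fin, ZLattice.rank ℝ L, finrank_euclideanSpace_fin]
end

section
/- Let L ⊂ ℝ^N be a full-rank lattice, 1 ≤ m ≤ N, and U ⊂ ℝ^N a nonempty open cone. Then U contains m vectors l1, …, lm of L forming a primitive set, i.e., a set extendable to a ℤ-basis of L. -/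
/-!
Lattice points approximate every direction, so the open cone `U` contains a nonzero lattice
vector `q`. By the Smith normal form of `ℤ ∙ q ⊆ L`, `q` is a positive multiple of a vector `c i`
of some basis `c` of `L`, hence `c i ∈ U`. The shear `c j ↦ c j + k j • c i` (with `k i = 0`) is
unimodular, and for large `k j` the vector `c j + k j • c i = k j • (c i + (k j)⁻¹ • c j)` lies in
`U`. This yields a basis of `L` inside `U`, and any `m` of its vectors form a primitive set.
-/

open Filter Topology Module

theorem IsOpen.exists_mem_ne {X : Type*} [TopologicalSpace X] [PerfectSpace X] {U : Set X}
    (hU : IsOpen U) (hne : U.Nonempty) (a : X) : ∃ y ∈ U, y ≠ a := by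
  obtain ⟨x, hx⟩ := hne
  by_cases hxa : x = a
  · subst hxa
    have h : ∀ᶠ y in 𝓝[≠] x, y ∈ U ∧ y ≠ x :=
      (eventually_nhdsWithin_of_eventually_nhds (hU.mem_nhds hx)).and self_mem_nhdsWithin
    exact h.exists
  · exact ⟨x, hx, hxa⟩

namespace Module.Basis

theorem exists_basis_eq_smul {R M ι : Type*} [CommRing R] [IsDomain R] [IsPrincipalIdealRing R]
    [AddCommGroup M] [Module R M] [Finite ι] (b₀ : Basis ι R M) {q : M} (hq : q ≠ 0) :
    ∃ (b : Basis ι R M) (j : ι) (k : R), q = k • b j := by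
  obtain ⟨n, snf⟩ := Submodule.smithNormalForm b₀ (R ∙ q)
  have : Nontrivial (R ∙ q) :=
    nontrivial_of_ne ⟨q, Submodule.mem_span_singleton_self q⟩ 0 (by simpa using hq)
  obtain ⟨i⟩ := snf.bN.index_nonempty
  -- `z • q` is the basis vector `snf.bN i = snf.a i • snf.bM (snf.f i)`, so `q` has no other
  -- coordinates in `snf.bM`.
  obtain ⟨z, hz⟩ := Submodule.mem_span_singleton.mp (snf.bN i).2
  have hz0 : z ≠ 0 := by
    rintro rfl
    exact snf.bN.ne_zero i (Subtype.ext (by simpa using hz.symm))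
  have hrel : z • q = snf.a i • snf.bM (snf.f i) := hz.trans (snf.snf i)
  refine ⟨snf.bM, snf.f i, snf.bM.repr q (snf.f i), snf.bM.ext_elem fun j => ?_⟩
  rcases eq_or_ne j (snf.f i) with rfl | hj
  · simp
  · have := congr_arg (fun v => snf.bM.repr v j) hrel
    simp only [map_smul, Finsupp.smul_apply, repr_self, Finsupp.single_eq_of_ne hj,
      smul_eq_mul, mul_zero, mul_eq_zero, hz0, false_or] at this
    simp [this, Finsupp.single_eq_of_ne hj]

theorem exists_basis_eq_nsmul {M ι : Type*} [AddCommGroup M] [Finite ι] (b₀ : Basis ι ℤ M)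
    {q : M} (hq : q ≠ 0) : ∃ (b : Basis ι ℤ M) (j : ι) (n : ℕ), 0 < n ∧ q = n • b j := by
  obtain ⟨b, j, k, rfl⟩ := b₀.exists_basis_eq_smul hq
  obtain ⟨n, rfl | rfl⟩ := Int.eq_nat_or_neg k
  · exact ⟨b, j, n, Nat.pos_of_ne_zero (by rintro rfl; simp at hq), natCast_zsmul _ _⟩
  · exact ⟨b.map (LinearEquiv.neg ℤ), j, n, Nat.pos_of_ne_zero (by rintro rfl; simp at hq),
      by simp⟩

theorem exists_basis_eq_add_smul {R M ι : Type*} [CommRing R] [AddCommGroup M] [Module R M]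
    (c : Basis ι R M) (i : ι) (k : ι → R) (hk : k i = 0) :
    ∃ b : Basis ι R M, ∀ j, b j = c j + k j • c i :=
  ⟨c.map (LinearEquiv.transvection (f := c.constr R k) (v := c i) (by simpa using hk)),
    fun j => by simp [LinearMap.transvection.apply]⟩

end Module.Basis

section OpenCone

variable {E : Type*} [NormedAddCommGroup E] [NormedSpace ℝ E] {U : Set E}

theorem eventually_add_nsmul_mem_of_isOpen_cone (hUo : IsOpen U)
    (hU : ∀ x ∈ U, ∀ t : ℝ, 0 < t → t • x ∈ U) {p : E} (hp : p ∈ U) (y : E) :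
    ∀ᶠ n : ℕ in atTop, y + n • p ∈ U := by
  have hlim : Tendsto (fun n : ℕ => (n : ℝ)⁻¹ • y + p) atTop (𝓝 p) := by
    simpa using (tendsto_inv_atTop_nhds_zero_nat (𝕜 := ℝ)).smul_const y |>.add_const p
  filter_upwards [hlim.eventually (hUo.mem_nhds hp), eventually_gt_atTop 0] with n hn hn0
  have hn0' : (n : ℝ) ≠ 0 := by positivity
  simpa [smul_add, smul_smul, hn0', ← Nat.cast_smul_eq_nsmul ℝ] using hU _ hn n (by positivity)

theorem ZSpan.tendsto_inv_smul_floor_smul {ι : Type*} [Fintype ι] (b : Basis ι ℝ E) (x : E) :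
    Tendsto (fun n : ℕ => (n : ℝ)⁻¹ • (ZSpan.floor b ((n : ℝ) • x) : E)) atTop (𝓝 x) := by
  have hfract : Tendsto (fun n : ℕ => (n : ℝ)⁻¹ • ZSpan.fract b ((n : ℝ) • x)) atTop (𝓝 0) := by
    refine squeeze_zero_norm (fun n => ?_)
      (by simpa using (tendsto_inv_atTop_nhds_zero_nat (𝕜 := ℝ)).mul_const (∑ i, ‖b i‖))
    rw [norm_smul, norm_inv, RCLike.norm_natCast]
    exact mul_le_mul_of_nonneg_left (ZSpan.norm_fract_le b _) (by positivity)
  refine (tendsto_const_nhds.sub hfract).congr' ?_ |>.mono_right (by rw [sub_zero])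
  filter_upwards [eventually_gt_atTop 0] with n hn
  have hn0 : (n : ℝ) ≠ 0 := by positivity
  rw [ZSpan.fract_apply, smul_sub, inv_smul_smul₀ hn0, sub_sub_cancel]

theorem ZLattice.exists_ne_zero_mem_of_isOpen_cone [FiniteDimensional ℝ E] (L : Submodule ℤ E)
    [DiscreteTopology L] [IsZLattice ℝ L] {ι : Type*} [Fintype ι] (b : Basis ι ℤ L)
    (hUo : IsOpen U) (hU : ∀ x ∈ U, ∀ t : ℝ, 0 < t → t • x ∈ U) {x : E} (hx : x ∈ U)
    (hx0 : x ≠ 0) : ∃ l : L, l ≠ 0 ∧ (l : E) ∈ U := by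
  let e := b.ofZLatticeBasis ℝ L
  have hlim := ZSpan.tendsto_inv_smul_floor_smul e x
  obtain ⟨n, ⟨hnU, hn0⟩, hn⟩ := (hlim.eventually ((hUo.inter isOpen_ne).mem_nhds ⟨hx, hx0⟩)
    |>.and (eventually_gt_atTop 0)).exists
  have hmem : (ZSpan.floor e ((n : ℝ) • x) : E) ∈ L := by
    simpa [e, b.ofZLatticeBasis_span ℝ] using (ZSpan.floor e ((n : ℝ) • x)).2
  refine ⟨⟨_, hmem⟩, fun h => hn0 (by simp [show (ZSpan.floor e ((n : ℝ) • x) : E) = 0 from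
    congr_arg Subtype.val h]), ?_⟩
  simpa [smul_smul, (by positivity : (n : ℝ) ≠ 0)] using hU _ hnU n (by positivity)

theorem ZLattice.exists_basis_forall_mem_of_isOpen_cone [FiniteDimensional ℝ E]
    (L : Submodule ℤ E) [DiscreteTopology L] [IsZLattice ℝ L] {ι : Type*} [Fintype ι]
    (b₀ : Basis ι ℤ L) (hUo : IsOpen U) (hUne : U.Nonempty)
    (hU : ∀ x ∈ U, ∀ t : ℝ, 0 < t → t • x ∈ U) : ∃ b : Basis ι ℤ L, ∀ i, (b i : E) ∈ U := by
  classical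
  rcases isEmpty_or_nonempty ι with hι | ⟨⟨i₀⟩⟩
  · exact ⟨b₀, isEmptyElim⟩
  have : Nontrivial E := nontrivial_of_ne _ _ ((b₀.ofZLatticeBasis ℝ L).ne_zero i₀)
  obtain ⟨x, hx, hx0⟩ := hUo.exists_mem_ne hUne 0
  obtain ⟨q, hq0, hqU⟩ := ZLattice.exists_ne_zero_mem_of_isOpen_cone L b₀ hUo hU hx hx0
  obtain ⟨c, i, n, hn, rfl⟩ := b₀.exists_basis_eq_nsmul hq0
  have hci : (c i : E) ∈ U := by
    simpa [← Nat.cast_smul_eq_nsmul ℝ, smul_smul, hn.ne'] using hU _ hqU (n : ℝ)⁻¹ (by positivity)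
  choose k hk using fun j => (eventually_add_nsmul_mem_of_isOpen_cone hUo hU hci (c j)).exists
  obtain ⟨b, hb⟩ := c.exists_basis_eq_add_smul i (Function.update (fun j => (k j : ℤ)) i 0)
    (by simp)
  refine ⟨b, fun j => ?_⟩
  rcases eq_or_ne j i with rfl | hj
  · simpa [hb] using hci
  · simpa [hb, hj] using hk j

end OpenCone

theorem open_cone_contains_primitive_set_general {N m : ℕ} (hmN : m ≤ N)
    (L : Submodule ℤ (EuclideanSpace ℝ (Fin N)))
    [DiscreteTopology L] [IsZLattice ℝ L]
    (U : Set (EuclideanSpace ℝ (Fin N))) (hUo : IsOpen U) (hUne : U.Nonempty)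
    (hUcone : ∀ x ∈ U, ∀ t : ℝ, 0 < t → t • x ∈ U) :
    ∃ l : Fin m → L, (∀ i, ((l i : L) : EuclideanSpace ℝ (Fin N)) ∈ U) ∧
      ∃ (b : Module.Basis (Fin N) ℤ L) (f : Fin m ↪ Fin N), ∀ i, b (f i) = l i := by
  let b₀ : Basis (Fin N) ℤ L :=
    finBasisOfFinrankEq ℤ L (by rw [ZLattice.rank ℝ L, finrank_euclideanSpace_fin])
  obtain ⟨b, hb⟩ := ZLattice.exists_basis_forall_mem_of_isOpen_cone L b₀ hUo hUne hUcone
  exact ⟨fun i => b (Fin.castLE hmN i), fun i => hb _, b, Fin.castLEEmb hmN, fun _ => rfl⟩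

/-- A nonempty open cone in `ℝ^N` contains a primitive set of `m` vectors of any full-rank
lattice `L`, i.e. `m` lattice vectors that can be extended to a `ℤ`-basis of `L`. -/
theorem open_cone_contains_primitive_set {N m : ℕ} (hm : 1 ≤ m) (hmN : m ≤ N)
    (L : Submodule ℤ (EuclideanSpace ℝ (Fin N)))
    [DiscreteTopology L] [IsZLattice ℝ L]
    (U : Set (EuclideanSpace ℝ (Fin N))) (hUo : IsOpen U) (hUne : U.Nonempty)
    (hUcone : ∀ x ∈ U, ∀ t : ℝ, 0 < t → t • x ∈ U) :
    ∃ l : Fin m → L, (∀ i, ((l i : L) : EuclideanSpace ℝ (Fin N)) ∈ U) ∧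
      ∃ (b : Module.Basis (Fin N) ℤ L) (f : Fin m ↪ Fin N), ∀ i, b (f i) = l i :=
  open_cone_contains_primitive_set_general hmN L U hUo hUne hUcone
end

section
/- Let L* be a lattice of rank 2 in ℝ² with automorphism group R ⊂ O(2) (orthogonal maps preserving L*). Suppose τ ∈ R with τ ≠ 1 fixes a primitive vector l1* of L*. Then either (a) there exists l2* ∈ L* with l1* · l2* = 0 such that (l1*, l2*) is a ℤ-basis of L*, or (b) τ² = 1 and there exists l2* ∈ L* such that l1* = l2* + τ(l2*) and (l2*, τ(l2*)) is a ℤ-basis of L*. -/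
/-!
Write `τ` in the basis `(l1, v)` of `L*` as `τ v = a l1 + c v`. Since `τ` restricts to an
automorphism of `L*`, the determinant `c` of its matrix `[[1, a], [0, c]]` is a unit of `ℤ`.
If `c = 1`, then `τ v - v = a l1` is orthogonal to `l1` because `τ` is an isometry fixing `l1`,
so `a = 0` and `τ = 1`. If `c = -1`, then `τ² = 1`, and for `a = 2k` resp. `a = 2k + 1` the
vector `l2 = v - k l1` satisfies `τ l2 = -l2` (so `l2 ⊥ l1`) resp. `τ l2 = l1 - l2`; in both
cases the change of basis is unimodular.
-/

open RealInnerProductSpace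

namespace Module.Basis

variable {ι R M : Type*} [Fintype ι] [DecidableEq ι] [CommRing R] [AddCommGroup M] [Module R M]

theorem exists_basis_coe_eq_of_isUnit_det (b : Basis ι R M) {v : ι → M} (h : IsUnit (b.det v)) :
    ∃ b' : Basis ι R M, ⇑b' = v :=
  let hv := (b.is_basis_iff_det).mpr h
  ⟨.mk hv.1 hv.2.ge, coe_mk _ _⟩

theorem isUnit_repr_map_one_one (b : Basis (Fin 2) R M) (σ : M ≃ₗ[R] M) (h0 : σ (b 0) = b 0) :
    IsUnit (b.repr (σ (b 1)) 1) := by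
  have := LinearEquiv.isUnit_det σ b b
  rw [Matrix.det_fin_two] at this
  simpa [LinearMap.toMatrix_apply, h0] using this

theorem exists_map_one_eq_smul_add_or_smul_sub {G : Type*} [AddCommGroup G]
    (b : Basis (Fin 2) ℤ G) (σ : G ≃ₗ[ℤ] G) (h0 : σ (b 0) = b 0) :
    ∃ a : ℤ, σ (b 1) = a • b 0 + b 1 ∨ σ (b 1) = a • b 0 - b 1 := by
  have hσ1 := b.sum_repr (σ (b 1))
  rw [Fin.sum_univ_two] at hσ1
  refine ⟨b.repr (σ (b 1)) 0, ?_⟩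
  rcases Int.isUnit_iff.mp (b.isUnit_repr_map_one_one σ h0) with h | h <;>
    rw [h] at hσ1
  · exact .inl (by simpa using hσ1.symm)
  · exact .inr (by simpa [sub_eq_add_neg] using hσ1.symm)

variable (b : Basis (Fin 2) R M) {σ : M →ₗ[R] M} {a : R}

theorem map_map_eq_self_of_map_one_eq_smul_sub (h0 : σ (b 0) = b 0)
    (h1 : σ (b 1) = a • b 0 - b 1) (x : M) : σ (σ x) = x := by
  suffices σ ∘ₗ σ = LinearMap.id from LinearMap.congr_fun this x
  refine b.ext fun i => ?_
  fin_cases i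
  · simp [h0]
  · simp [h1, h0]

theorem exists_basis_map_one_eq_neg (k : R) (h0 : σ (b 0) = b 0)
    (h1 : σ (b 1) = (2 * k) • b 0 - b 1) :
    ∃ b' : Basis (Fin 2) R M, b' 0 = b 0 ∧ σ (b' 1) = -b' 1 := by
  obtain ⟨b', hb'⟩ := b.exists_basis_coe_eq_of_isUnit_det (v := ![b 0, b 1 - k • b 0])
    (by simp [det_apply, Matrix.det_fin_two, toMatrix_apply])
  refine ⟨b', by simp [hb'], ?_⟩
  simp only [hb', Matrix.cons_val_one, Matrix.cons_val_zero, map_sub, map_smul, h0, h1]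
  module

theorem exists_basis_add_eq_map_zero_eq (k : R) (h0 : σ (b 0) = b 0)
    (h1 : σ (b 1) = (2 * k + 1) • b 0 - b 1) :
    ∃ b' : Basis (Fin 2) R M, b 0 = b' 0 + b' 1 ∧ σ (b' 0) = b' 1 := by
  obtain ⟨b', hb'⟩ := b.exists_basis_coe_eq_of_isUnit_det
    (v := ![b 1 - k • b 0, (k + 1) • b 0 - b 1])
    (by simp [det_apply, Matrix.det_fin_two, toMatrix_apply])
  refine ⟨b', ?_, ?_⟩ <;>
    simp only [hb', Matrix.cons_val_one, Matrix.cons_val_zero, map_sub, map_smul, h0, h1] <;>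
    module

end Module.Basis

namespace LinearIsometry

variable {E : Type*} [NormedAddCommGroup E] [InnerProductSpace ℝ E] (τ : E →ₗᵢ[ℝ] E) {x y : E}

theorem smul_eq_zero_of_map_eq_smul_add {t : ℝ} (hx : τ x = x) (hy : τ y = t • x + y) :
    t • x = 0 := by
  have h := τ.inner_map_map x y
  rw [hx, hy, inner_add_right, real_inner_smul_right] at h
  rcases mul_eq_zero.mp (show t * ⟪x, x⟫ = 0 by linarith) with ht | hxx
  · rw [ht, zero_smul]
  · rw [inner_self_eq_zero.mp hxx, smul_zero]

theorem inner_eq_zero_of_map_eq_neg (hx : τ x = x) (hy : τ y = -y) : ⟪x, y⟫ = 0 := by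
  have h := τ.inner_map_map x y
  rw [hx, hy, inner_neg_right] at h
  linarith

end LinearIsometry

namespace LinearIsometryEquiv

variable {E : Type*} [NormedAddCommGroup E] [InnerProductSpace ℝ E]

section

variable (τ : E ≃ₗᵢ[ℝ] E) (L : Submodule ℤ E) (hτL : ∀ x, x ∈ L ↔ τ x ∈ L)

def intRestrict : L ≃ₗ[ℤ] L :=
  (τ.toLinearEquiv.restrictScalars ℤ).ofSubmodules L L <| by
    ext x
    refine ⟨fun ⟨y, hy, hyx⟩ => hyx ▸ (hτL y).mp hy, fun hx => ⟨τ.symm x, ?_, τ.apply_symm_apply x⟩⟩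
    exact (hτL _).mpr (by rwa [τ.apply_symm_apply])

@[simp]
theorem coe_intRestrict_apply (x : L) : (τ.intRestrict L hτL x : E) = τ x :=
  rfl

end

theorem ext_zlattice (L : Submodule ℤ E) [DiscreteTopology L] [IsZLattice ℝ L]
    {σ τ : E ≃ₗᵢ[ℝ] E} (h : ∀ x ∈ L, σ x = τ x) : σ = τ :=
  ext <| LinearMap.congr_fun <|
    LinearMap.ext_on (f := σ.toLinearEquiv.toLinearMap) (g := τ.toLinearEquiv.toLinearMap)
      IsZLattice.span_top h

end LinearIsometryEquiv

theorem fixed_primitive_vector_dichotomy_general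
    (L : Submodule ℤ (EuclideanSpace ℝ (Fin 2)))
    [DiscreteTopology L] [IsZLattice ℝ L]
    (τ : EuclideanSpace ℝ (Fin 2) ≃ₗᵢ[ℝ] EuclideanSpace ℝ (Fin 2))
    (hτL : ∀ x : EuclideanSpace ℝ (Fin 2), x ∈ L ↔ τ x ∈ L)
    (hτne : τ ≠ LinearIsometryEquiv.refl ℝ (EuclideanSpace ℝ (Fin 2)))
    (l1 : EuclideanSpace ℝ (Fin 2))
    (hprim : ∃ b : Module.Basis (Fin 2) ℤ L, ((b 0 : L) : EuclideanSpace ℝ (Fin 2)) = l1)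
    (hfix : τ l1 = l1) :
    (∃ l2 ∈ L, ⟪l1, l2⟫ = (0 : ℝ) ∧
      ∃ b : Module.Basis (Fin 2) ℤ L,
        ((b 0 : L) : EuclideanSpace ℝ (Fin 2)) = l1 ∧
        ((b 1 : L) : EuclideanSpace ℝ (Fin 2)) = l2) ∨
    (τ.trans τ = LinearIsometryEquiv.refl ℝ (EuclideanSpace ℝ (Fin 2)) ∧
      ∃ l2 ∈ L, l1 = l2 + τ l2 ∧
      ∃ b : Module.Basis (Fin 2) ℤ L,
        ((b 0 : L) : EuclideanSpace ℝ (Fin 2)) = l2 ∧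
        ((b 1 : L) : EuclideanSpace ℝ (Fin 2)) = τ l2) := by
  obtain ⟨b, rfl⟩ := hprim
  set σ := τ.intRestrict L hτL
  have hσ0 : σ (b 0) = b 0 := Subtype.ext hfix
  obtain ⟨a, hσ1 | hσ1⟩ := b.exists_map_one_eq_smul_add_or_smul_sub σ hσ0
  · have hτ1 : τ (b 1) = (a : ℝ) • (b 0 : EuclideanSpace ℝ (Fin 2)) + b 1 := by
      simpa [σ, Int.cast_smul_eq_zsmul] using congrArg Subtype.val hσ1
    have hσ1' : σ (b 1) = b 1 := by
      apply Subtype.ext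
      rw [LinearIsometryEquiv.coe_intRestrict_apply, hτ1,
        τ.toLinearIsometry.smul_eq_zero_of_map_eq_smul_add hfix hτ1, zero_add]
    have hσ : σ = LinearEquiv.refl ℤ L := b.ext' (Fin.forall_fin_two.2 ⟨hσ0, hσ1'⟩)
    exact absurd (LinearIsometryEquiv.ext_zlattice L fun x hx =>
      congrArg Subtype.val (LinearEquiv.congr_fun hσ ⟨x, hx⟩)) hτne
  obtain ⟨k, rfl | rfl⟩ := Int.even_or_odd' a
  · obtain ⟨b', hb'0, hb'1⟩ := b.exists_basis_map_one_eq_neg k hσ0 hσ1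
    exact .inl ⟨b' 1, (b' 1).2,
      τ.toLinearIsometry.inner_eq_zero_of_map_eq_neg hfix (congrArg Subtype.val hb'1),
      b', congrArg Subtype.val hb'0, rfl⟩
  · have hτ2 : τ.trans τ = LinearIsometryEquiv.refl ℝ _ :=
      LinearIsometryEquiv.ext_zlattice L fun x hx => congrArg Subtype.val
        (b.map_map_eq_self_of_map_one_eq_smul_sub hσ0 hσ1 ⟨x, hx⟩)
    obtain ⟨b', hb'0, hb'1⟩ := b.exists_basis_add_eq_map_zero_eq k hσ0 hσ1
    rw [← hb'1] at hb'0
    exact .inr ⟨hτ2, b' 0, (b' 0).2, congrArg Subtype.val hb'0, b', rfl,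
      (congrArg Subtype.val hb'1).symm⟩

/-- If an automorphism `τ ≠ 1` of a rank-2 lattice `L*` in `ℝ²` fixes a primitive vector
`l1*`, then either (a) there is `l2* ∈ L*` orthogonal to `l1*` with `(l1*, l2*)` a `ℤ`-basis
of `L*`, or (b) `τ² = 1` and there is `l2* ∈ L*` with `l1* = l2* + τ l2*` and
`(l2*, τ l2*)` a `ℤ`-basis of `L*`. -/
theorem fixed_primitive_vector_dichotomy
    (L : Submodule ℤ (EuclideanSpace ℝ (Fin 2)))
    [DiscreteTopology L] [IsZLattice ℝ L]
    (τ : EuclideanSpace ℝ (Fin 2) ≃ₗᵢ[ℝ] EuclideanSpace ℝ (Fin 2))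
    (hτL : ∀ x : EuclideanSpace ℝ (Fin 2), x ∈ L ↔ τ x ∈ L)
    (hτne : τ ≠ LinearIsometryEquiv.refl ℝ (EuclideanSpace ℝ (Fin 2)))
    (l1 : EuclideanSpace ℝ (Fin 2)) (hl1 : l1 ∈ L)
    (hprim : ∃ b : Module.Basis (Fin 2) ℤ L, ((b 0 : L) : EuclideanSpace ℝ (Fin 2)) = l1)
    (hfix : τ l1 = l1) :
    (∃ l2 ∈ L, ⟪l1, l2⟫ = (0 : ℝ) ∧
      ∃ b : Module.Basis (Fin 2) ℤ L,
        ((b 0 : L) : EuclideanSpace ℝ (Fin 2)) = l1 ∧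
        ((b 1 : L) : EuclideanSpace ℝ (Fin 2)) = l2) ∨
    (τ.trans τ = LinearIsometryEquiv.refl ℝ (EuclideanSpace ℝ (Fin 2)) ∧
      ∃ l2 ∈ L, l1 = l2 + τ l2 ∧
      ∃ b : Module.Basis (Fin 2) ℤ L,
        ((b 0 : L) : EuclideanSpace ℝ (Fin 2)) = l2 ∧
        ((b 1 : L) : EuclideanSpace ℝ (Fin 2)) = τ l2) :=
  fixed_primitive_vector_dichotomy_general L τ hτL hτne l1 hprim hfix
end

section
/- Any positive-definite real symmetric N×N matrix S can be written as a finite sum S = Σ_k λ_k S_k where each S_k is a positive-definite symmetric matrix with rational entries and the λ_k are positive real numbers that are linearly independent over ℚ. -/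
/-!
Let `1, μ₁, …, μₘ` be a `ℚ`-basis of the `ℚ`-span of `1` and the entries of `S`, so that
`S = F₀ + ∑ μₖ Fₖ` with rational symmetric `Fₖ`. Choosing rationals `rₖ` slightly below `μₖ`,
the rational matrix `A = F₀ + ∑ rₖ Fₖ = S - ∑ νₖ Fₖ`, `νₖ = μₖ - rₖ > 0`, is a small perturbation
of `S`, hence positive definite, and so is `A + t Fₖ` for a small rational `t > 0` fixed beforehand.
Then `S = (1 - ∑ νₖ / t) A + ∑ (νₖ / t) (A + t Fₖ)`, and the coefficients are `ℚ`-linearly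
independent since they span the same `ℚ`-space as `1, μ₁, …, μₘ`.
-/

open Matrix Filter Topology Set Submodule

section LinearAlgebra

variable {K V : Type*} [DivisionRing K] [AddCommGroup V] [Module K V]

theorem LinearIndependent.of_span_le {ι : Type*} [Fintype ι] {v w : ι → V}
    (hv : LinearIndependent K v) (h : span K (range v) ≤ span K (range w)) :
    LinearIndependent K w := by
  have := Module.Finite.span_of_finite K (finite_range w)
  rw [linearIndependent_iff_card_le_finrank_span] at hv ⊢
  exact hv.trans (Submodule.finrank_mono h)

theorem exists_linearIndependent_finCons_subset_span {v : V} (hv : v ≠ 0) {s : Set V}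
    (hs : s.Finite) :
    ∃ (m : ℕ) (μ : Fin m → V), LinearIndependent K (Fin.cons v μ : Fin (m + 1) → V) ∧
      s ⊆ span K (range (Fin.cons v μ : Fin (m + 1) → V)) := by
  obtain ⟨b, hbs, hvb, hsb, hb⟩ := exists_linearIndepOn_id_extension
    (LinearIndepOn.singleton (R := K) hv) (singleton_subset_iff.2 (mem_insert v s))
  have hvb : v ∈ b := singleton_subset_iff.1 hvb
  have : Finite ↑(b \ {v}) := ((hs.insert v).subset hbs).sdiff
  let e := Finite.equivFin ↑(b \ {v})
  have hrange : range (fun k => (e.symm k : V)) = b \ {v} := by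
    rw [range_comp' Subtype.val e.symm, e.symm.surjective.range_eq, image_univ, Subtype.range_coe]
  refine ⟨_, fun k => e.symm k, linearIndependent_finCons.2 ⟨?_, ?_⟩, ?_⟩
  · exact (hb.mono sdiff_subset).comp e.symm e.symm.injective
  · rw [hrange]
    refine ((linearIndepOn_id_insert fun h => h.2 rfl).1 ?_).2
    rwa [insert_sdiff_singleton, insert_eq_of_mem hvb]
  · rw [Fin.range_cons, hrange, insert_sdiff_singleton, insert_eq_of_mem hvb]
    exact (subset_insert v s).trans hsb

end LinearAlgebra

theorem sum_finCons_smul_finCons {K M : Type*} [Field K] [AddCommGroup M] [Module K M] {m : ℕ}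
    (A : M) (G : Fin m → M) (ν : Fin m → K) {t : K} (ht : t ≠ 0) :
    ∑ i, (Fin.cons (1 - ∑ k, ν k / t) (fun k => ν k / t) : Fin (m + 1) → K) i •
        (Fin.cons A (fun k => A + t • G k) : Fin (m + 1) → M) i = A + ∑ k, ν k • G k := by
  simp only [Fin.sum_univ_succ, Fin.cons_zero, Fin.cons_succ, smul_add, smul_smul,
    div_mul_cancel₀ _ ht, Finset.sum_add_distrib, ← Finset.sum_smul, sub_smul, one_smul]
  abel

theorem finCons_one_sub_sum_div_pos {K : Type*} [Field K] [LinearOrder K] [IsStrictOrderedRing K]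
    {m : ℕ} {ν : Fin m → K} {t : K} (hν : ∀ k, 0 < ν k) (hsum : ∑ k, ν k < t) (i : Fin (m + 1)) :
    0 < (Fin.cons (1 - ∑ k, ν k / t) (fun k => ν k / t) : Fin (m + 1) → K) i := by
  have ht : 0 < t := (Finset.sum_nonneg fun k _ => (hν k).le).trans_lt hsum
  refine Fin.cases ?_ (fun k => ?_) i
  · rwa [Fin.cons_zero, ← Finset.sum_div, sub_pos, div_lt_one ht]
  · exact div_pos (hν k) ht

theorem linearIndependent_finCons_one_sub_sum_div {m : ℕ} {μ : Fin m → ℝ}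
    (hμ : LinearIndependent ℚ (Fin.cons 1 μ : Fin (m + 1) → ℝ)) (r : Fin m → ℚ) {t : ℚ}
    (ht : t ≠ 0) :
    LinearIndependent ℚ (Fin.cons (1 - ∑ k, (μ k - r k) / t) (fun k => (μ k - r k) / t) :
      Fin (m + 1) → ℝ) := by
  set lam : Fin (m + 1) → ℝ := Fin.cons (1 - ∑ k, (μ k - r k) / t) (fun k => (μ k - r k) / t)
  have hmem : ∀ i, lam i ∈ span ℚ (range lam) := fun i => subset_span (mem_range_self i)
  have hone : (1 : ℝ) ∈ span ℚ (range lam) := by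
    have : (1 : ℝ) = lam 0 + ∑ k : Fin m, lam k.succ := by simp [lam]
    rw [this]
    exact add_mem (hmem 0) (sum_mem fun k _ => hmem k.succ)
  refine hμ.of_span_le (span_le.2 ?_)
  rw [Fin.range_cons, insert_subset_iff, range_subset_iff]
  refine ⟨hone, fun k => ?_⟩
  have : μ k = r k • (1 : ℝ) + t • lam k.succ := by
    simp only [lam, Fin.cons_succ, Rat.smul_def]
    field_simp
    ring
  rw [this]
  exact add_mem (smul_mem _ _ hone) (smul_mem _ _ (hmem k.succ))

def ratSymmMatrices (n : Type*) : Submodule ℚ (Matrix n n ℝ) where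
  carrier := {M | M.IsSymm ∧ ∀ a b, ∃ q : ℚ, M a b = q}
  add_mem' := by
    rintro M M' ⟨hM, hMq⟩ ⟨hM', hM'q⟩
    refine ⟨hM.add hM', fun a b => ?_⟩
    obtain ⟨q, hq⟩ := hMq a b
    obtain ⟨q', hq'⟩ := hM'q a b
    exact ⟨q + q', by simp [hq, hq']⟩
  zero_mem' := ⟨isSymm_zero, fun _ _ => ⟨0, by simp⟩⟩
  smul_mem' := by
    rintro c M ⟨hM, hMq⟩
    refine ⟨hM.smul c, fun a b => ?_⟩
    obtain ⟨q, hq⟩ := hMq a b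
    exact ⟨c * q, by simp [hq, Rat.smul_def]⟩

theorem exists_eq_sum_smul_mem_ratSymmMatrices {n ι : Type*} [Fintype ι] {w : ι → ℝ}
    (hw : LinearIndependent ℚ w) {S : Matrix n n ℝ} (hS : S.IsSymm)
    (hmem : ∀ a b, S a b ∈ span ℚ (range w)) :
    ∃ F : ι → Matrix n n ℝ, (∀ i, F i ∈ ratSymmMatrices n) ∧ S = ∑ i, w i • F i := by
  set c : n → n → ι →₀ ℚ := fun a b => hw.repr ⟨S a b, hmem a b⟩
  have hc : ∀ a b, c b a = c a b := fun a b =>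
    congrArg hw.repr (Subtype.ext (hS.apply a b))
  refine ⟨fun i => of fun a b => (c a b i : ℝ),
    fun i => ⟨IsSymm.ext fun a b => by simp [hc], fun a b => ⟨_, rfl⟩⟩, ?_⟩
  ext a b
  have := hw.linearCombination_repr ⟨S a b, hmem a b⟩
  rw [Finsupp.linearCombination_apply, Finsupp.sum_fintype _ _ (by simp)] at this
  simp only [Matrix.sum_apply, Matrix.smul_apply, of_apply, smul_eq_mul]
  exact this.symm.trans (Finset.sum_congr rfl fun i _ => by simp [c, Rat.smul_def, mul_comm])

theorem Matrix.PosDef.eventually_posDef_of_isSymm {n : Type*} [Fintype n] {S : Matrix n n ℝ}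
    (hS : S.PosDef) : ∀ᶠ M in 𝓝 S, M.IsSymm → M.PosDef := by
  have hcont : Continuous fun p : Matrix n n ℝ × (n → ℝ) => p.2 ⬝ᵥ p.1 *ᵥ p.2 :=
    continuous_snd.dotProduct (continuous_fst.matrix_mulVec continuous_snd)
  have hsphere : ∀ᶠ M in 𝓝 S, ∀ x ∈ Metric.sphere (0 : n → ℝ) 1, 0 < x ⬝ᵥ M *ᵥ x := by
    refine (isCompact_sphere 0 1).eventually_forall_of_forall_eventually fun x hx => ?_
    have hx0 : x ≠ 0 := ne_zero_of_mem_unit_sphere ⟨x, hx⟩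
    exact hcont.continuousAt.eventually (lt_mem_nhds (by simpa using hS.dotProduct_mulVec_pos hx0))
  filter_upwards [hsphere] with M hM hMsymm
  refine .of_dotProduct_mulVec_pos (isHermitian_iff_isSymm.2 hMsymm) fun x hx => ?_
  have hnx : 0 < ‖x‖ := norm_pos_iff.2 hx
  have := hM (‖x‖⁻¹ • x) (by simp [norm_smul, hnx.ne'])
  simp only [mulVec_smul, dotProduct_smul, smul_dotProduct, smul_eq_mul] at this
  simpa using pos_of_mul_pos_right (pos_of_mul_pos_right this (by positivity)) (by positivity)

theorem Matrix.PosDef.eventually_eventually_posDef_sub_sum_smul {n ι : Type*} [Fintype n]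
    [Fintype ι] {S : Matrix n n ℝ} (hS : S.PosDef) {G : ι → Matrix n n ℝ}
    (hG : ∀ k, (G k).IsSymm) :
    ∀ᶠ t in 𝓝 (0 : ℝ), ∀ᶠ ν in 𝓝 (0 : ι → ℝ),
      (S - ∑ j, ν j • G j).PosDef ∧ ∀ k, (S - ∑ j, ν j • G j + t • G k).PosDef := by
  have key : ∀ H : Matrix n n ℝ, H.IsSymm →
      ∀ᶠ p in 𝓝 ((0 : ℝ), (0 : ι → ℝ)), (S - ∑ j, p.2 j • G j + p.1 • H).PosDef := by
    intro H hH
    have hlim : Tendsto (fun p : ℝ × (ι → ℝ) => S - ∑ j, p.2 j • G j + p.1 • H)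
        (𝓝 (0, 0)) (𝓝 S) := by
      have : Continuous fun p : ℝ × (ι → ℝ) => S - ∑ j, p.2 j • G j + p.1 • H := by fun_prop
      simpa using this.tendsto (0, 0)
    refine (hlim.eventually hS.eventually_posDef_of_isSymm).mono fun p hp =>
      hp (IsSymm.ext fun a b => ?_)
    simp [Matrix.sum_apply, (isHermitian_iff_isSymm.1 hS.isHermitian).apply, (hG _).apply,
      hH.apply]
  have := (key 0 isSymm_zero).and (eventually_all.2 fun k => key (G k) (hG k))
  rw [nhds_prod_eq] at this
  exact this.curry.mono fun t ht => ht.mono fun ν h => ⟨by simpa using h.1, h.2⟩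

theorem Filter.Eventually.exists_rat_pos {P : ℝ → Prop} (h : ∀ᶠ t in 𝓝 0, P t) :
    ∃ t : ℚ, 0 < t ∧ P t := by
  obtain ⟨ε, hε, hball⟩ := Metric.eventually_nhds_iff.1 h
  obtain ⟨t, ht0, htε⟩ := exists_rat_btwn hε
  exact ⟨t, by exact_mod_cast ht0, hball (by rwa [dist_zero_right, Real.norm_of_nonneg ht0.le])⟩

theorem Filter.Eventually.exists_rat_lt_sub {ι : Type*} [Fintype ι] {P : (ι → ℝ) → Prop}
    (h : ∀ᶠ ν in 𝓝 0, P ν) (μ : ι → ℝ) :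
    ∃ r : ι → ℚ, (∀ k, (r k : ℝ) < μ k) ∧ P fun k => μ k - r k := by
  obtain ⟨δ, hδ, hball⟩ := Metric.eventually_nhds_iff.1 h
  choose r hr using fun k => exists_rat_btwn (sub_lt_self (μ k) hδ)
  refine ⟨r, fun k => (hr k).2, hball ((dist_pi_lt_iff hδ).2 fun k => ?_)⟩
  simp only [Real.dist_eq, Pi.zero_apply, sub_zero, abs_lt]
  constructor <;> linarith [hr k]

/-- Any positive-definite real symmetric matrix is a finite positive linear combination
`S = Σ λ_k • S_k` of positive-definite symmetric matrices with rational entries, where the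
positive real coefficients `λ_k` are linearly independent over `ℚ`. -/
theorem posDef_decomposition_rational {N : ℕ}
    (S : Matrix (Fin N) (Fin N) ℝ) (hSsymm : S.IsSymm) (hS : S.PosDef) :
    ∃ (k : ℕ) (lam : Fin k → ℝ) (T : Fin k → Matrix (Fin N) (Fin N) ℝ),
      (∀ i, 0 < lam i) ∧ LinearIndependent ℚ lam ∧
      (∀ i, (T i).IsSymm ∧ (T i).PosDef ∧ ∀ a b, ∃ q : ℚ, T i a b = (q : ℝ)) ∧
      S = ∑ i, lam i • T i := by
  obtain ⟨m, μ, hμ, hspan⟩ := exists_linearIndependent_finCons_subset_span (K := ℚ) one_ne_zero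
    (finite_range fun p : Fin N × Fin N => S p.1 p.2)
  obtain ⟨F, hF, hSF⟩ :=
    exists_eq_sum_smul_mem_ratSymmMatrices hμ hSsymm fun a b => hspan ⟨(a, b), rfl⟩
  simp only [Fin.sum_univ_succ, Fin.cons_zero, Fin.cons_succ, one_smul] at hSF
  obtain ⟨t, ht, hPD⟩ :=
    (hS.eventually_eventually_posDef_sub_sum_smul fun k : Fin m => (hF k.succ).1).exists_rat_pos
  have hsmall : ∀ᶠ ν in 𝓝 (0 : Fin m → ℝ), ∑ k, ν k < (t : ℝ) :=
    ((continuous_finsetSum _ fun k _ => continuous_apply k).tendsto' 0 0 (by simp)).eventually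
      (gt_mem_nhds (by exact_mod_cast ht))
  obtain ⟨r, hr, ⟨hA, hT⟩, hsum⟩ := (hPD.and hsmall).exists_rat_lt_sub μ
  set ν : Fin m → ℝ := fun k => μ k - r k
  set A := S - ∑ k, ν k • F k.succ
  have hArat : A = F 0 + ∑ k, r k • F k.succ := by
    simp only [A, ν, hSF, sub_smul, Finset.sum_sub_distrib, Rat.cast_smul_eq_qsmul]
    abel
  have hAmem : A ∈ ratSymmMatrices (Fin N) :=
    hArat ▸ add_mem (hF 0) (sum_mem fun k _ => smul_mem _ _ (hF k.succ))
  refine ⟨m + 1, Fin.cons (1 - ∑ k, ν k / t) fun k => ν k / t,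
    Fin.cons A fun k => A + (t : ℝ) • F k.succ,
    finCons_one_sub_sum_div_pos (fun k => sub_pos.2 (hr k)) hsum,
    linearIndependent_finCons_one_sub_sum_div hμ r ht.ne', fun i => ?_, ?_⟩
  · refine Fin.cases ⟨hAmem.1, hA, hAmem.2⟩ (fun k => ?_) i
    have hTk := add_mem hAmem (smul_mem _ t (hF k.succ))
    rw [← Rat.cast_smul_eq_qsmul ℝ] at hTk
    exact ⟨hTk.1, hT k, hTk.2⟩
  · rw [sum_finCons_smul_finCons _ _ _ (by exact_mod_cast ht.ne')]
    simp [A]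
end

section
/- Let G be a crystallographic group with translation lattice L, point group R_G, and reciprocal lattice L* = {l* : l·l* ∈ ℤ for all l ∈ L}. For l* ∈ L*, let R_{G,l*} ⊂ R_G be the stabilizer of l*. Then l* belongs to Γ_ext(G) (i.e., Σ_{σ ∈ G/L} e^{-2πi x^σ·l*} = 0 for all x ∈ ℝ^N/L) if and only if there exists τ ∈ R_G such that τ l* = l* and ν_τ · l* ∉ ℤ. -/
open RealInnerProductSpace

namespace ExtinctionAux

variable {N : ℕ}

lemma exp_int_mul (n : ℤ) :
    Complex.exp ((-2 * Real.pi * Complex.I) * (n : ℂ)) = 1 := by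
  rw [Complex.exp_eq_one_iff]
  exact ⟨-n, by push_cast; ring⟩

lemma exp_add_int (a : ℝ) (n : ℤ) :
    Complex.exp ((-2 * Real.pi * Complex.I) * ((a + n : ℝ) : ℂ)) =
      Complex.exp ((-2 * Real.pi * Complex.I) * (a : ℂ)) := by
  push_cast
  rw [mul_add, Complex.exp_add, exp_int_mul, mul_one]

/-- The character `x ↦ e^{-2πi ⟪x, w⟫}` as a monoid hom on `Multiplicative V`. -/
noncomputable def chi (w : EuclideanSpace ℝ (Fin N)) :
    Multiplicative (EuclideanSpace ℝ (Fin N)) →* ℂ where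
  toFun x := Complex.exp ((-2 * Real.pi * Complex.I) * ((⟪Multiplicative.toAdd x, w⟫ : ℝ) : ℂ))
  map_one' := by
    simp
  map_mul' x y := by
    simp only [toAdd_mul, inner_add_left]
    push_cast
    rw [mul_add, Complex.exp_add]

lemma chi_injective : Function.Injective (chi (N := N)) := by
  intro w w' h
  by_contra hne
  set d := w - w' with hd
  have hd0 : d ≠ 0 := sub_ne_zero.mpr hne
  have hdd : ⟪d, d⟫ ≠ 0 := inner_self_ne_zero.mpr hd0
  set x : EuclideanSpace ℝ (Fin N) := ((2 * ⟪d, d⟫)⁻¹) • d with hx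
  have hxd : ⟪x, d⟫ = 1 / 2 := by
    rw [hx, real_inner_smul_left, mul_inv, mul_assoc, inv_mul_cancel₀ hdd, mul_one]
    norm_num
  have h1 : ⟪x, w⟫ - ⟪x, w'⟫ = (1 : ℝ) / 2 := by
    rw [← inner_sub_right, ← hd, hxd]
  have h2 := congrArg (fun f : Multiplicative (EuclideanSpace ℝ (Fin N)) →* ℂ =>
    f (Multiplicative.ofAdd x)) h
  simp only [chi, MonoidHom.coe_mk, OneHom.coe_mk, toAdd_ofAdd] at h2
  have h3 : Complex.exp ((-2 * Real.pi * Complex.I) * ((⟪x, w⟫ : ℝ) : ℂ) -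
      (-2 * Real.pi * Complex.I) * ((⟪x, w'⟫ : ℝ) : ℂ)) = 1 := by
    rw [Complex.exp_sub, h2, div_self (Complex.exp_ne_zero _)]
  have h4 : ((-2 : ℂ) * Real.pi * Complex.I) * ((⟪x, w⟫ : ℝ) : ℂ) -
      (-2 * Real.pi * Complex.I) * ((⟪x, w'⟫ : ℝ) : ℂ)
      = -(Real.pi * Complex.I) := by
    rw [← mul_sub]
    have : ((⟪x, w⟫ : ℝ) : ℂ) - ((⟪x, w'⟫ : ℝ) : ℂ) = (1 : ℂ) / 2 := by
      rw [← Complex.ofReal_sub, h1]; norm_num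
    rw [this]; ring
  rw [h4] at h3
  have h5 : Complex.exp (-(Real.pi * Complex.I)) = -1 := by
    rw [Complex.exp_neg, Complex.exp_pi_mul_I]
    norm_num
  rw [h5] at h3
  norm_num at h3

/-- Linear independence of the exponential characters: if a finite combination vanishes
everywhere, all coefficients vanish. -/
lemma coeff_eq_zero (W : Finset (EuclideanSpace ℝ (Fin N)))
    (a : EuclideanSpace ℝ (Fin N) → ℂ)
    (h : ∀ x : EuclideanSpace ℝ (Fin N),
      ∑ w ∈ W, a w * Complex.exp ((-2 * Real.pi * Complex.I) * ((⟪x, w⟫ : ℝ) : ℂ)) = 0) :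
    ∀ w ∈ W, a w = 0 := by
  have hli : LinearIndependent ℂ
      ((fun f : Multiplicative (EuclideanSpace ℝ (Fin N)) →* ℂ => (f : _ → ℂ)) ∘ chi) :=
    (linearIndependent_monoidHom (Multiplicative (EuclideanSpace ℝ (Fin N))) ℂ).comp
      chi chi_injective
  refine linearIndependent_iff'.mp hli W a ?_
  funext x
  simp only [Finset.sum_apply, Pi.smul_apply, Function.comp_apply, smul_eq_mul,
    Pi.zero_apply]
  exact h (Multiplicative.toAdd x)

end ExtinctionAux

open ExtinctionAux

/-- Characterization of reciprocal lattice vectors corresponding to systematic absences at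
general positions: for a crystallographic group given by a lattice `L`, a finite point group
`R` preserving `L`, and a translation cocycle `ν`, a reciprocal lattice vector `l*` satisfies
`Σ_{σ ∈ G/L} e^{-2πi σ(x)·l*} = 0` for every `x` if and only if there exists `τ ∈ R` fixing
`l*` with `ν_τ · l* ∉ ℤ`. -/
theorem extinction_iff_exists_fixing_nonintegral {N : ℕ}
    (L : Submodule ℤ (EuclideanSpace ℝ (Fin N)))
    [DiscreteTopology L] [IsZLattice ℝ L]
    (R : Finset (EuclideanSpace ℝ (Fin N) ≃ₗᵢ[ℝ] EuclideanSpace ℝ (Fin N)))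
    (hone : LinearIsometryEquiv.refl ℝ (EuclideanSpace ℝ (Fin N)) ∈ R)
    (hmulmem : ∀ σ ∈ R, ∀ τ ∈ R, τ.trans σ ∈ R)
    (hinvmem : ∀ σ ∈ R, σ.symm ∈ R)
    (hRL : ∀ σ ∈ R, ∀ l ∈ L, σ l ∈ L)
    (ν : (EuclideanSpace ℝ (Fin N) ≃ₗᵢ[ℝ] EuclideanSpace ℝ (Fin N)) →
      EuclideanSpace ℝ (Fin N))
    (hν1 : ν (LinearIsometryEquiv.refl ℝ (EuclideanSpace ℝ (Fin N))) ∈ L)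
    (hcocycle : ∀ σ ∈ R, ∀ τ ∈ R, ν (τ.trans σ) - (σ (ν τ) + ν σ) ∈ L)
    (lstar : EuclideanSpace ℝ (Fin N))
    (hlstar : ∀ l ∈ L, ∃ n : ℤ, ⟪l, lstar⟫ = (n : ℝ)) :
    ((∀ x : EuclideanSpace ℝ (Fin N),
        ∑ τ ∈ R, Complex.exp ((-2 * Real.pi * Complex.I) * ((⟪τ x + ν τ, lstar⟫ : ℝ) : ℂ)) = 0)
      ↔ ∃ τ ∈ R, (∀ x : EuclideanSpace ℝ (Fin N), ⟪τ x, lstar⟫ = ⟪x, lstar⟫) ∧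
          ¬∃ n : ℤ, ⟪ν τ, lstar⟫ = (n : ℝ)) := by
  classical
  constructor
  · -- forward direction
    intro h
    by_contra hcon
    push_neg at hcon
    -- `hcon : ∀ τ ∈ R, (∀ x, ⟪τ x, lstar⟫ = ⟪x, lstar⟫) → ∃ n, ⟪ν τ, lstar⟫ = n`
    set φ : (EuclideanSpace ℝ (Fin N) ≃ₗᵢ[ℝ] EuclideanSpace ℝ (Fin N)) →
        EuclideanSpace ℝ (Fin N) := fun σ => σ.symm lstar with hφ
    set W := R.image φ with hW
    set a : EuclideanSpace ℝ (Fin N) → ℂ := fun w =>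
      ∑ σ ∈ R.filter (fun σ => φ σ = w),
        Complex.exp ((-2 * Real.pi * Complex.I) * ((⟪ν σ, lstar⟫ : ℝ) : ℂ)) with ha
    have hinner : ∀ (σ : EuclideanSpace ℝ (Fin N) ≃ₗᵢ[ℝ] EuclideanSpace ℝ (Fin N))
        (y : EuclideanSpace ℝ (Fin N)), ⟪σ y, lstar⟫ = ⟪y, σ.symm lstar⟫ := by
      intro σ y
      conv_lhs => rw [← σ.apply_symm_apply lstar]
      exact σ.inner_map_map y (σ.symm lstar)
    have hsum : ∀ x : EuclideanSpace ℝ (Fin N),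
        ∑ w ∈ W, a w * Complex.exp ((-2 * Real.pi * Complex.I) * ((⟪x, w⟫ : ℝ) : ℂ)) = 0 := by
      intro x
      have key : ∀ σ ∈ R,
          Complex.exp ((-2 * Real.pi * Complex.I) * ((⟪σ x + ν σ, lstar⟫ : ℝ) : ℂ))
          = Complex.exp ((-2 * Real.pi * Complex.I) * ((⟪ν σ, lstar⟫ : ℝ) : ℂ)) *
            Complex.exp ((-2 * Real.pi * Complex.I) * ((⟪x, φ σ⟫ : ℝ) : ℂ)) := by
        intro σ hσ
        rw [← Complex.exp_add, ← mul_add, ← Complex.ofReal_add]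
        congr 2
        rw [inner_add_left, hinner σ x, hφ]
        ring
      calc ∑ w ∈ W, a w * Complex.exp ((-2 * Real.pi * Complex.I) * ((⟪x, w⟫ : ℝ) : ℂ))
          = ∑ w ∈ W, ∑ σ ∈ R.filter (fun σ => φ σ = w),
              Complex.exp ((-2 * Real.pi * Complex.I) * ((⟪σ x + ν σ, lstar⟫ : ℝ) : ℂ)) := by
            refine Finset.sum_congr rfl fun w _ => ?_
            rw [ha, Finset.sum_mul]
            refine Finset.sum_congr rfl fun σ hσ => ?_
            rw [Finset.mem_filter] at hσ
            rw [key σ hσ.1, hσ.2]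
        _ = ∑ σ ∈ R, Complex.exp
              ((-2 * Real.pi * Complex.I) * ((⟪σ x + ν σ, lstar⟫ : ℝ) : ℂ)) :=
            Finset.sum_fiberwise_of_maps_to (fun σ hσ => Finset.mem_image_of_mem φ hσ) _
        _ = 0 := h x
    have hlW : lstar ∈ W := by
      refine Finset.mem_image.mpr ⟨LinearIsometryEquiv.refl ℝ (EuclideanSpace ℝ (Fin N)),
        hone, ?_⟩
      rfl
    have h0 := coeff_eq_zero W a hsum lstar hlW
    have hcard : a lstar = (R.filter (fun σ => φ σ = lstar)).card := by
      rw [ha]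
      rw [Finset.card_eq_sum_ones, Nat.cast_sum]
      refine Finset.sum_congr rfl fun σ hσ => ?_
      rw [Finset.mem_filter] at hσ
      have hfix' : ∀ y : EuclideanSpace ℝ (Fin N), ⟪σ y, lstar⟫ = ⟪y, lstar⟫ := by
        intro y
        rw [hinner σ y]
        exact congrArg (fun z => ⟪y, z⟫) hσ.2
      obtain ⟨n, hn⟩ := hcon σ hσ.1 hfix'
      rw [hn]
      simpa using exp_int_mul n
    have hne : (R.filter (fun σ => φ σ = lstar)).Nonempty := by
      refine ⟨LinearIsometryEquiv.refl ℝ (EuclideanSpace ℝ (Fin N)), ?_⟩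
      rw [Finset.mem_filter]
      exact ⟨hone, rfl⟩
    rw [h0] at hcard
    have hz : (R.filter (fun σ => φ σ = lstar)).card = 0 := by exact_mod_cast hcard.symm
    have hpos := Finset.card_pos.mpr hne
    omega
  · rintro ⟨τ, hτR, hfix, hnint⟩ x
    set c : ℂ := Complex.exp ((-2 * Real.pi * Complex.I) * ((⟪ν τ, lstar⟫ : ℝ) : ℂ)) with hc
    set S : ℂ := ∑ σ ∈ R, Complex.exp
      ((-2 * Real.pi * Complex.I) * ((⟪σ x + ν σ, lstar⟫ : ℝ) : ℂ)) with hS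
    have hterm : ∀ ρ ∈ R,
        Complex.exp ((-2 * Real.pi * Complex.I) * ((⟪(ρ.trans τ) x + ν (ρ.trans τ), lstar⟫ : ℝ) : ℂ))
        = c * Complex.exp ((-2 * Real.pi * Complex.I) * ((⟪ρ x + ν ρ, lstar⟫ : ℝ) : ℂ)) := by
      intro ρ hρ
      obtain ⟨n, hn⟩ := hlstar _ (hcocycle τ hτR ρ hρ)
      have h2 : ⟪ν (ρ.trans τ), lstar⟫ = ⟪ν ρ, lstar⟫ + ⟪ν τ, lstar⟫ + n := by
        rw [inner_sub_left, inner_add_left, hfix (ν ρ)] at hn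
        linarith
      have h3 : ⟪(ρ.trans τ) x, lstar⟫ = ⟪ρ x, lstar⟫ := by
        simpa using hfix (ρ x)
      have e1 : ⟪(ρ.trans τ) x + ν (ρ.trans τ), lstar⟫
          = (⟪ρ x + ν ρ, lstar⟫ + ⟪ν τ, lstar⟫) + n := by
        rw [inner_add_left, inner_add_left, h2, h3]
        ring
      rw [e1, exp_add_int, Complex.ofReal_add, mul_add, Complex.exp_add, hc]
      ring
    have hkey : S = c * S := by
      rw [hS, Finset.mul_sum]
      refine Finset.sum_nbij' (fun σ => σ.trans τ.symm) (fun σ => σ.trans τ) ?_ ?_ ?_ ?_ ?_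
      · intro σ hσ
        exact hmulmem τ.symm (hinvmem τ hτR) σ hσ
      · intro σ hσ
        exact hmulmem τ hτR σ hσ
      · intro σ hσ
        ext y
        simp
      · intro σ hσ
        ext y
        simp
      · intro σ hσ
        have := hterm (σ.trans τ.symm) (hmulmem τ.symm (hinvmem τ hτR) σ hσ)
        have heq : (σ.trans τ.symm).trans τ = σ := by
          ext y
          simp
        rw [heq] at this
        exact this
    have hc1 : c ≠ 1 := by
      intro h1
      rw [hc, Complex.exp_eq_one_iff] at h1
      obtain ⟨n, hn⟩ := h1
      apply hnint
      refine ⟨-n, ?_⟩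
      have hπ : (2 * (Real.pi : ℂ) * Complex.I) ≠ 0 := by
        simp [Real.pi_ne_zero, Complex.I_ne_zero]
      have h0 : (((⟪ν τ, lstar⟫ : ℝ) : ℂ) + n) * (2 * (Real.pi : ℂ) * Complex.I) = 0 := by
        linear_combination -hn
      rcases mul_eq_zero.mp h0 with h | h
      · have : ((⟪ν τ, lstar⟫ : ℝ) : ℂ) = ((-n : ℤ) : ℂ) := by
          push_cast
          linear_combination h
        exact_mod_cast this
      · exact absurd h hπ
    have h0 : (c - 1) * S = 0 := by
      rw [sub_mul, one_mul, ← hkey, sub_self]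
    rcases mul_eq_zero.mp h0 with h' | h'
    · exact absurd (by linear_combination h' : c = 1) hc1
    · exact h'
end

section
/- Let G be a crystallographic group with point group R_G of order M acting on V = ℝ^N/L, and let l* ∈ L*. Then the map τ ↦ e^{2πi ν_τ · l*}, for τ ∈ R_{G, l*} (the stabilizer of l* in R_G), is a group homomorphism from R_{G, l*} to the unit circle. -/
open RealInnerProductSpace

/-- For a crystallographic group given by a lattice `L`, a finite point group `R`
preserving `L`, and a translation cocycle `ν`, the map `τ ↦ e^{2πi ν_τ · l*}` is a group
homomorphism on the stabilizer of a reciprocal lattice vector `l*`: for `σ, τ` in the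
stabilizer, `e^{2πi ν_{στ}·l*} = e^{2πi ν_σ·l*} · e^{2πi ν_τ·l*}`. -/
theorem exp_translation_part_hom_on_stabilizer {N : ℕ}
    (L : Submodule ℤ (EuclideanSpace ℝ (Fin N)))
    [DiscreteTopology L] [IsZLattice ℝ L]
    (R : Finset (EuclideanSpace ℝ (Fin N) ≃ₗᵢ[ℝ] EuclideanSpace ℝ (Fin N)))
    (hone : LinearIsometryEquiv.refl ℝ (EuclideanSpace ℝ (Fin N)) ∈ R)
    (hmulmem : ∀ σ ∈ R, ∀ τ ∈ R, τ.trans σ ∈ R)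
    (hinvmem : ∀ σ ∈ R, σ.symm ∈ R)
    (hRL : ∀ σ ∈ R, ∀ l ∈ L, σ l ∈ L)
    (ν : (EuclideanSpace ℝ (Fin N) ≃ₗᵢ[ℝ] EuclideanSpace ℝ (Fin N)) →
      EuclideanSpace ℝ (Fin N))
    (hν1 : ν (LinearIsometryEquiv.refl ℝ (EuclideanSpace ℝ (Fin N))) ∈ L)
    (hcocycle : ∀ σ ∈ R, ∀ τ ∈ R, ν (τ.trans σ) - (σ (ν τ) + ν σ) ∈ L)
    (lstar : EuclideanSpace ℝ (Fin N))
    (hlstar : ∀ l ∈ L, ∃ n : ℤ, ⟪l, lstar⟫ = (n : ℝ))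
    (σ τ : EuclideanSpace ℝ (Fin N) ≃ₗᵢ[ℝ] EuclideanSpace ℝ (Fin N))
    (hσR : σ ∈ R) (hτR : τ ∈ R)
    (hσstab : ∀ x : EuclideanSpace ℝ (Fin N), ⟪σ x, lstar⟫ = ⟪x, lstar⟫)
    (hτstab : ∀ x : EuclideanSpace ℝ (Fin N), ⟪τ x, lstar⟫ = ⟪x, lstar⟫) :
    Complex.exp ((2 * Real.pi * Complex.I) * ((⟪ν (τ.trans σ), lstar⟫ : ℝ) : ℂ)) =
      Complex.exp ((2 * Real.pi * Complex.I) * ((⟪ν σ, lstar⟫ : ℝ) : ℂ)) *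
      Complex.exp ((2 * Real.pi * Complex.I) * ((⟪ν τ, lstar⟫ : ℝ) : ℂ)) := by
  obtain ⟨n, hn⟩ := hlstar _ (hcocycle σ hσR τ hτR)
  have key : (⟪ν (τ.trans σ), lstar⟫ : ℝ) = n + ⟪ν σ, lstar⟫ + ⟪ν τ, lstar⟫ := by
    have := hn
    rw [inner_sub_left, inner_add_left, hσstab] at this
    linarith
  rw [key, ← Complex.exp_add]
  push_cast
  rw [show (2 * Real.pi * Complex.I) * ((n : ℂ) + ⟪ν σ, lstar⟫ + ⟪ν τ, lstar⟫) =
      (2 * Real.pi * Complex.I) * (⟪ν σ, lstar⟫ : ℝ) +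
      (2 * Real.pi * Complex.I) * (⟪ν τ, lstar⟫ : ℝ) + n * (2 * Real.pi * Complex.I) by
    push_cast; ring]
  rw [Complex.exp_add, Complex.exp_int_mul_two_pi_mul_I, mul_one]
end

section
/- Let S ∈ S^N_{≻0} be positive-definite symmetric and let u, v ∈ ℤ^N be Voronoi vectors of S (i.e., uᵀSu = min{wᵀSw : w ∈ u + 2ℤ^N} and similarly for v) with u + 2ℤ^N = v + 2ℤ^N and [u] ≠ [v]. Then (u+v)/2 and (u-v)/2 lie in ℤ^N and are also Voronoi vectors of S. -/
open Matrix

/-- The value of the quadratic form given by a real matrix `S` on an integer vector. -/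
def intQuadVal {N : ℕ} (S : Matrix (Fin N) (Fin N) ℝ) (v : Fin N → ℤ) : ℝ :=
  (fun k => (v k : ℝ)) ⬝ᵥ S.mulVec (fun k => (v k : ℝ))

/-- `v` is a Voronoi vector of `S`: it minimizes `wᵀ S w` over its class mod `2ℤ^N`. -/
def IsVoronoiVector {N : ℕ} (S : Matrix (Fin N) (Fin N) ℝ) (v : Fin N → ℤ) : Prop :=
  ∀ w : Fin N → ℤ, (∃ z : Fin N → ℤ, w = v + 2 • z) → intQuadVal S v ≤ intQuadVal S w

lemma quad_parallelogram {N : ℕ} (S : Matrix (Fin N) (Fin N) ℝ) (x y : Fin N → ℤ) :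
    intQuadVal S (x + y) + intQuadVal S (x - y) =
      2 * intQuadVal S x + 2 * intQuadVal S y := by
  have hadd : (fun k => ((x + y) k : ℝ)) = (fun k => (x k : ℝ)) + (fun k => (y k : ℝ)) := by
    funext k; simp [Pi.add_apply]
  have hsub : (fun k => ((x - y) k : ℝ)) = (fun k => (x k : ℝ)) - (fun k => (y k : ℝ)) := by
    funext k; simp [Pi.sub_apply]
  simp only [intQuadVal, hadd, hsub, Matrix.mulVec_add, Matrix.mulVec_sub,
    dotProduct_add, dotProduct_sub, add_dotProduct, sub_dotProduct]
  ring

/-- If `u` and `v` are Voronoi vectors of a positive-definite symmetric matrix `S` in the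
same class mod `2ℤ^N` with `[u] ≠ [v]`, then `(u+v)/2` and `(u-v)/2` are integer vectors and
are also Voronoi vectors of `S`. -/
theorem half_sum_diff_voronoi {N : ℕ}
    (S : Matrix (Fin N) (Fin N) ℝ) (hSsymm : S.IsSymm) (hS : S.PosDef)
    (u v : Fin N → ℤ)
    (hu : IsVoronoiVector S u) (hv : IsVoronoiVector S v)
    (hclass : ∃ z : Fin N → ℤ, v = u + 2 • z)
    (hne : v ≠ u ∧ v ≠ -u) :
    ∃ a b : Fin N → ℤ, u + v = 2 • a ∧ u - v = 2 • b ∧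
      IsVoronoiVector S a ∧ IsVoronoiVector S b := by
  obtain ⟨z, hz⟩ := hclass
  set a : Fin N → ℤ := u + z with ha
  set b : Fin N → ℤ := -z with hb
  have hab : a + b = u := by rw [ha, hb]; abel
  have hab' : a - b = v := by rw [ha, hb, hz]; abel
  have par2 : intQuadVal S u + intQuadVal S v =
      2 * intQuadVal S a + 2 * intQuadVal S b := by
    rw [← hab, ← hab']; exact quad_parallelogram S a b
  refine ⟨a, b, ?_, ?_, ?_, ?_⟩
  · rw [ha, hz]; abel
  · rw [hb, hz]; abel
  · intro w ⟨z', hw⟩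
    have h1 : intQuadVal S u ≤ intQuadVal S (w + b) := by
      refine hu _ ⟨z', ?_⟩
      rw [hw, ← hab]; abel
    have h2 : intQuadVal S v ≤ intQuadVal S (w - b) := by
      refine hv _ ⟨z', ?_⟩
      rw [hw, ← hab']; abel
    have par1 := quad_parallelogram S w b
    linarith
  · intro w ⟨z', hw⟩
    have h1 : intQuadVal S u ≤ intQuadVal S (w + a) := by
      refine hu _ ⟨z', ?_⟩
      rw [hw, ← hab]; abel
    have h2 : intQuadVal S v ≤ intQuadVal S (w - a) := by
      refine hv _ ⟨z' - v, ?_⟩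
      rw [hw, ha, hb, hz]; funext k
      simp only [Pi.add_apply, Pi.sub_apply, Pi.neg_apply, Pi.smul_apply, smul_eq_mul]
      ring
    have par1 := quad_parallelogram S w a
    linarith
end
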